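/- arXiv:1109.4335 — 2 statements merged into one kernel-verified Lean document; each statement's English description precedes it below -/
import Mathlib

section
/- Let the initial valuation satisfy v(t_x) = v(¬t_x) = 0 for all x ∈ I, with arbitrary values v(p_{xy}) ∈ [0,1]. Then the upper revised valuation v* equals the first iterate Tv and is given by: v*(t_x) = min over y ≠ x of v(p_{xy}); v*(¬t_x) = 0; and v*(p_{xy}) = v(p_{xy}) for all distinct x, y. Consequently the most prominent option is the x ∈ I maximizing min over y ≠ x of v(p_{xy}) (the maximin winner). -/
/-! With `t = 0` the clause `t_x ∨ ⋁_{y ≠ x} p_{yx}` only ever raises `t_x`, to the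
minimum of row `x` of the preference matrix: the bound `t_x ≤ p_{xy}` keeps every
off-diagonal `p_{xy}` where it is, so the rows, and hence the `t_x`, are stable from the
first step on. Only the meaningless diagonal entries `p_{xx}` may move once more, which
is why `T²v`, rather than `Tv`, is the fixed point. -/

/-- A valuation for prominence doctrines: degrees of belief for the literals
`t_x` ("x is prominent"), `¬t_x`, and `p_{xy}` ("x is preferable to y", for
distinct `x, y`), under the identification `¬p_{xy} = p_{yx}`. -/
structure PVal (I : Type*) where
  t : I → ℝ
  nt : I → ℝ
  p : I → I → ℝ

/-- Max over a (possibly empty) index set of reals: the empty max is `0`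
(note `Real.sSup_empty = 0`). -/
noncomputable def sup0 (S : Set ℝ) : ℝ := sSup S

open Classical in
/-- Min over a (possibly empty) index set of reals: the empty min is `1`. -/
noncomputable def inf1 (S : Set ℝ) : ℝ := if S.Nonempty then sInf S else 1

/-- The one-step revision operator associated with the doctrine consisting only
of the clauses `t_x ∨ ⋁_{y ≠ x} p_{yx}`. -/
noncomputable def Tmm {I : Type*} (v : PVal I) : PVal I where
  t := fun x => max (v.t x) (inf1 {b : ℝ | ∃ y, y ≠ x ∧ b = v.p x y})
  nt := fun x => v.nt x
  p := fun x y => max (v.p x y)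
    (min (v.t x) (inf1 {b : ℝ | ∃ z, z ≠ x ∧ z ≠ y ∧ b = v.p z x}))

lemma inf1_nonneg {S : Set ℝ} (h : ∀ b ∈ S, 0 ≤ b) : 0 ≤ inf1 S := by
  unfold inf1
  split_ifs with hS
  exacts [le_csInf hS h, zero_le_one]

lemma inf1_le {S : Set ℝ} (hS : BddBelow S) {b : ℝ} (hb : b ∈ S) : inf1 S ≤ b := by
  rw [inf1, if_pos ⟨b, hb⟩]
  exact csInf_le hS hb

lemma Function.eq_of_eventually_iterate_eq {α : Type*} {f : α → α} {x y : α} {k : ℕ}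
    (hfix : Function.IsFixedPt f (f^[k] x)) (h : ∃ N, ∀ n ≥ N, f^[n] x = y) :
    y = f^[k] x := by
  obtain ⟨N, hN⟩ := h
  rw [← hN (N + k) (by omega), Function.iterate_add_apply, (hfix.iterate N).eq]

attribute [ext] PVal

namespace PVal

variable {I : Type*}

def row (a : PVal I) (x : I) : Set ℝ := {b | ∃ y, y ≠ x ∧ b = a.p x y}

def column (a : PVal I) (x y : I) : Set ℝ := {b | ∃ z, z ≠ x ∧ z ≠ y ∧ b = a.p z x}

def EqOffDiag (a b : PVal I) : Prop := ∀ x y, x ≠ y → a.p x y = b.p x y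

def Dominated (a : PVal I) : Prop := ∀ x y, x ≠ y → a.t x ≤ a.p x y

variable {a b : PVal I}

lemma EqOffDiag.row_eq (h : EqOffDiag a b) (x : I) : a.row x = b.row x := by
  ext c
  simp only [row, Set.mem_ofPred_eq]
  exact exists_congr fun y => and_congr_right fun hy => by rw [h x y hy.symm]

lemma EqOffDiag.column_eq (h : EqOffDiag a b) (x y : I) : a.column x y = b.column x y := by
  ext c
  simp only [column, Set.mem_ofPred_eq]
  exact exists_congr fun z => and_congr_right fun hz => by rw [h z x hz]

end PVal

namespace Tmm

open PVal

variable {I : Type*} {a : PVal I}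

lemma t_apply (a : PVal I) (x : I) : (Tmm a).t x = max (a.t x) (inf1 (a.row x)) := rfl

lemma nt_apply (a : PVal I) (x : I) : (Tmm a).nt x = a.nt x := rfl

lemma p_apply (a : PVal I) (x y : I) :
    (Tmm a).p x y = max (a.p x y) (min (a.t x) (inf1 (a.column x y))) := rfl

lemma eqOffDiag_of_dominated (ha : Dominated a) : EqOffDiag (Tmm a) a := fun x y hxy =>
  max_eq_left ((min_le_left _ _).trans (ha x y hxy))

lemma dominated (ha : Dominated a) (hrow : ∀ x, BddBelow (a.row x)) : Dominated (Tmm a) := by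
  intro x y hxy
  rw [t_apply, eqOffDiag_of_dominated ha x y hxy]
  exact max_le (ha x y hxy) (inf1_le (hrow x) ⟨y, hxy.symm, rfl⟩)

lemma t_Tmm_of_dominated (ha : Dominated a) : (Tmm (Tmm a)).t = (Tmm a).t := by
  ext x
  rw [t_apply, (eqOffDiag_of_dominated ha).row_eq, t_apply, max_assoc, max_self]

lemma isFixedPt_of_t_eq (ht : (Tmm a).t = a.t) (hp : EqOffDiag (Tmm a) a) :
    Function.IsFixedPt Tmm (Tmm a) := by
  ext x
  · rw [t_apply, hp.row_eq, t_apply]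
    exact max_eq_left (le_max_right _ _)
  · rfl
  · rename_i y
    rw [p_apply, hp.column_eq, ht, p_apply]
    exact max_eq_left (le_max_right _ _)

lemma isFixedPt_iterate_two (ha : Dominated a) (hrow : ∀ x, BddBelow (a.row x)) :
    Function.IsFixedPt Tmm (Tmm^[2] a) :=
  isFixedPt_of_t_eq (t_Tmm_of_dominated ha) (eqOffDiag_of_dominated (dominated ha hrow))

end Tmm

theorem stmt10_general {I : Type*}
    (v : PVal I)
    (hbox : ∀ x y : I, x ≠ y → v.p x y ∈ Set.Icc (0:ℝ) 1)
    (ht : ∀ x, v.t x = 0) (hnt : ∀ x, v.nt x = 0)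
    (vstar : PVal I) (hstar : ∃ N : ℕ, ∀ n ≥ N, Tmm^[n] v = vstar) :
    -- v* equals the first iterate Tv
    (∀ x, vstar.t x = (Tmm v).t x) ∧
    (∀ x, vstar.nt x = (Tmm v).nt x) ∧
    (∀ x y : I, x ≠ y → vstar.p x y = (Tmm v).p x y) ∧
    -- explicit formulas
    (∀ x, vstar.t x = inf1 {b : ℝ | ∃ y, y ≠ x ∧ b = v.p x y}) ∧
    (∀ x, vstar.nt x = 0) ∧
    (∀ x y : I, x ≠ y → vstar.p x y = v.p x y) ∧
    -- the most prominent option is the maximin winner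
    (∀ x : I,
      (∀ y : I, vstar.t y - vstar.nt y ≤ vstar.t x - vstar.nt x) ↔
      (∀ y : I, inf1 {b : ℝ | ∃ z, z ≠ y ∧ b = v.p y z} ≤
        inf1 {b : ℝ | ∃ z, z ≠ x ∧ b = v.p x z})) := by
  have hrow_nonneg (x : I) : ∀ b ∈ v.row x, 0 ≤ b := by
    rintro _ ⟨y, hy, rfl⟩
    exact (hbox x y hy.symm).1
  have hv : PVal.Dominated v := fun x y hxy => (ht x).trans_le (hbox x y hxy).1
  have hrow (x : I) : BddBelow (v.row x) := ⟨0, hrow_nonneg x⟩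
  obtain rfl := Function.eq_of_eventually_iterate_eq (Tmm.isFixedPt_iterate_two hv hrow) hstar
  have hstar_t : (Tmm (Tmm v)).t = (Tmm v).t := Tmm.t_Tmm_of_dominated hv
  have hstar_p := Tmm.eqOffDiag_of_dominated (Tmm.dominated hv hrow)
  have hTv_p := Tmm.eqOffDiag_of_dominated hv
  have hTv_t (x : I) : (Tmm v).t x = inf1 (v.row x) := by
    rw [Tmm.t_apply, ht x]
    exact max_eq_right (inf1_nonneg (hrow_nonneg x))
  refine ⟨fun x => congrFun hstar_t x, fun _ => rfl, hstar_p, fun x => ?_, hnt,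
    fun x y hxy => (hstar_p x y hxy).trans (hTv_p x y hxy), fun x => ?_⟩
  · exact (congrFun hstar_t x).trans (hTv_t x)
  · simp only [Function.iterate_succ_apply, Function.iterate_zero_apply, hstar_t, hTv_t,
      Tmm.nt_apply, hnt, sub_zero]
    rfl

/-- The maximin rule: with zero initial belief in the `t_x` and `¬t_x`, the
upper revised valuation equals the first iterate `Tv`, is given by
`v*(t_x) = min_{y ≠ x} v(p_{xy})`, `v*(¬t_x) = 0`, `v*(p_{xy}) = v(p_{xy})`;
consequently the most prominent options (those whose prominence gets a highest
acceptability) are exactly the maximin winners. -/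
theorem stmt10 {I : Type*} [Fintype I] [DecidableEq I]
    (hcard : 2 ≤ Fintype.card I)
    (v : PVal I)
    (hbox : ∀ x y : I, x ≠ y → v.p x y ∈ Set.Icc (0:ℝ) 1)
    (ht : ∀ x, v.t x = 0) (hnt : ∀ x, v.nt x = 0)
    (vstar : PVal I) (hstar : ∃ N : ℕ, ∀ n ≥ N, Tmm^[n] v = vstar) :
    -- v* equals the first iterate Tv
    (∀ x, vstar.t x = (Tmm v).t x) ∧
    (∀ x, vstar.nt x = (Tmm v).nt x) ∧
    (∀ x y : I, x ≠ y → vstar.p x y = (Tmm v).p x y) ∧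
    -- explicit formulas
    (∀ x, vstar.t x = inf1 {b : ℝ | ∃ y, y ≠ x ∧ b = v.p x y}) ∧
    (∀ x, vstar.nt x = 0) ∧
    (∀ x y : I, x ≠ y → vstar.p x y = v.p x y) ∧
    -- the most prominent option is the maximin winner
    (∀ x : I,
      (∀ y : I, vstar.t y - vstar.nt y ≤ vstar.t x - vstar.nt x) ↔
      (∀ y : I, inf1 {b : ℝ | ∃ z, z ≠ y ∧ b = v.p y z} ≤
        inf1 {b : ℝ | ∃ z, z ≠ x ∧ b = v.p x z})) :=
  stmt10_general v hbox ht hnt vstar hstar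
end

section
/- For the comprehensive prominence doctrine with initial values v(t_x) = v(¬t_x) = 0 for all x ∈ I, the upper revised valuation v* satisfies: (i) for every y ∈ I, v*(¬t_y) = max over nonempty subsets X ⊆ I \ {y} of (min over r ∈ X, s ∉ X of v(p_{rs})), this value being attained already at the first iterate; and (ii) for every x ∈ I such that t_x is accepted, i.e., v*(t_x) > v*(¬t_x), one has v*(t_x) = min over s ≠ x of v(p_{xs}). -/
/-- The one-step revision operator associated with the comprehensive prominence
doctrine, whose clauses are indexed by (nonempty) subsets `X ⊆ I`:
`⋁_{r ∈ X} t_r ∨ ⋁_{r ∈ X, s ∉ X} p_{sr}`, `¬t_y ∨ ⋁_{r ∈ X, s ∉ X} p_{sr}`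
for `y ∉ X`, and `¬t_x ∨ ¬t_y`; the min over an empty index set is `1` and
the max over an empty index set is `0`. -/
noncomputable def Tcp {I : Type*} (v : PVal I) : PVal I where
  t := fun x => max (v.t x)
    (sup0 {a : ℝ | ∃ X : Finset I, x ∈ X ∧
      a = min (inf1 {b : ℝ | ∃ r ∈ X, r ≠ x ∧ b = v.nt r})
              (inf1 {b : ℝ | ∃ r ∈ X, ∃ s, s ∉ X ∧ b = v.p r s})})
  nt := fun y => max (v.nt y)
    (max (sup0 {a : ℝ | ∃ r, r ≠ y ∧ a = v.t r})
         (sup0 {a : ℝ | ∃ X : Finset I, X.Nonempty ∧ y ∉ X ∧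
           a = inf1 {b : ℝ | ∃ r ∈ X, ∃ s, s ∉ X ∧ b = v.p r s}}))
  p := fun u w => max (v.p u w)
    (sup0 {a : ℝ | ∃ X : Finset I, w ∈ X ∧ u ∉ X ∧
      a = min (max (inf1 {b : ℝ | ∃ r ∈ X, b = v.nt r})
                   (sup0 {b : ℝ | ∃ s, s ∉ X ∧ b = v.t s}))
              (inf1 {b : ℝ | ∃ r ∈ X, ∃ s, s ∉ X ∧ ¬(r = w ∧ s = u) ∧
                b = v.p r s})})

/-!
Every iterate `w` of `Tcp` from `v` is *controlled* by the bounds `B(y) = v.sepBound y`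
(the right-hand side of (i)) and `m(x) = v.minOut x`: `w(¬t_y) ≤ B(y)`, `w(t_r) ≤ B(y)` for
`r ≠ y`, `w(t_x) ≤ max (B x) (m x)`, some `p_{xs}` stays below `max (B x) (m x)`, and every
cut `min_{r ∈ X, s ∉ X} w(p_{rs})` with `X` nonempty and `y ∉ X` stays below `B(y)`.
The last property is the delicate one. If after revision a cut `U` avoiding `y` exceeds
`β = B(y)`, its weakest edge `(r, s)` had value `≤ β` before and was raised through a set `Y`
with `s ∈ Y`, `r ∉ Y`, all of whose other outgoing edges already exceed `β`; the control of
the `t` and `¬t` values forces `y ∉ Y`, so `U ∪ Y` is a strictly larger such cut, which is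
absurd for a cut of maximal size.

Since `(Tcp v)(¬t_y) ≥ B(y)` directly, (i) follows. For (ii), an accepted `t_x` exceeds
`v*(¬t_x) = B(x)`, hence `v*(t_x) ≤ m(x)`, while already `(Tcp v)(t_x) ≥ m(x)` via `X = {x}`.
-/

lemma le_apply_iterate {α β : Type*} [Preorder β] {f : α → α} (g : α → β)
    (hf : ∀ a, g a ≤ g (f a)) (a : α) (n : ℕ) : g a ≤ g (f^[n] a) :=
  Function.Iterate.rec (fun b => g a ≤ g b) le_rfl (fun _ h => h.trans (hf _)) n

section Sup0Inf1

variable {S : Set ℝ} {a c : ℝ}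

lemma sup0_le (hc : 0 ≤ c) (h : ∀ a ∈ S, a ≤ c) : sup0 S ≤ c :=
  Real.sSup_le h hc

lemma le_sup0 (hS : S.Finite) (ha : a ∈ S) : a ≤ sup0 S :=
  le_csSup hS.bddAbove ha

lemma exists_lt_of_lt_sup0 (hc : 0 ≤ c) (h : c < sup0 S) : ∃ a ∈ S, c < a := by
  rcases S.eq_empty_or_nonempty with rfl | hne
  · rw [sup0, Real.sSup_empty] at h
    exact absurd h hc.not_gt
  · exact exists_lt_of_lt_csSup hne h

lemma inf1_le_s14 (hS : S.Finite) (ha : a ∈ S) : inf1 S ≤ a := by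
  rw [inf1, if_pos ⟨a, ha⟩]
  exact csInf_le hS.bddBelow ha

lemma le_inf1 (hc : c ≤ 1) (h : ∀ a ∈ S, c ≤ a) : c ≤ inf1 S := by
  unfold inf1
  split_ifs with hne
  · exact le_csInf hne h
  · exact hc

lemma inf1_mem (hS : S.Finite) (hne : S.Nonempty) : inf1 S ∈ S := by
  rw [inf1, if_pos hne]
  exact hne.csInf_mem hS

end Sup0Inf1

namespace PVal

variable {I : Type*}

noncomputable def cut (w : PVal I) (X : Finset I) : ℝ :=
  inf1 {b | ∃ r ∈ X, ∃ s, s ∉ X ∧ b = w.p r s}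

noncomputable def sepBound (w : PVal I) (y : I) : ℝ :=
  sup0 {a | ∃ X : Finset I, X.Nonempty ∧ y ∉ X ∧ a = w.cut X}

noncomputable def minOut (w : PVal I) (x : I) : ℝ :=
  inf1 {b | ∃ s, s ≠ x ∧ b = w.p x s}

section Basic

variable [Finite I] (w : PVal I) {X : Finset I} {r s x y : I}

lemma finite_cutSet (X : Finset I) : {b | ∃ r ∈ X, ∃ s, s ∉ X ∧ b = w.p r s}.Finite :=
  (Set.finite_range fun rs : I × I => w.p rs.1 rs.2).subset
    (by rintro _ ⟨r, -, s, -, rfl⟩; exact ⟨(r, s), rfl⟩)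

lemma cut_le (hr : r ∈ X) (hs : s ∉ X) : w.cut X ≤ w.p r s :=
  inf1_le_s14 (w.finite_cutSet X) ⟨r, hr, s, hs, rfl⟩

lemma exists_p_eq_cut (hr : r ∈ X) (hs : s ∉ X) : ∃ r ∈ X, ∃ s ∉ X, w.p r s = w.cut X := by
  obtain ⟨r', hr', s', hs', h⟩ := inf1_mem (w.finite_cutSet X) ⟨_, r, hr, s, hs, rfl⟩
  exact ⟨r', hr', s', hs', h.symm⟩

lemma cut_le_sepBound (hX : X.Nonempty) (hy : y ∉ X) : w.cut X ≤ w.sepBound y :=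
  le_sup0 ((Set.finite_range w.cut).subset (by rintro _ ⟨X, -, -, rfl⟩; exact ⟨X, rfl⟩))
    ⟨X, hX, hy, rfl⟩

lemma sepBound_nonneg [Nontrivial I] (h0 : ∀ x y, x ≠ y → 0 ≤ w.p x y) (y : I) :
    0 ≤ w.sepBound y := by
  obtain ⟨z, hz⟩ := exists_ne y
  refine (le_inf1 zero_le_one ?_).trans (w.cut_le_sepBound (Finset.singleton_nonempty z)
    (Finset.notMem_singleton.mpr hz.symm))
  rintro _ ⟨r, hr, s, hs, rfl⟩
  exact h0 r s (ne_of_mem_of_not_mem hr hs)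

lemma sepBound_le_max (hB : ∀ y, 0 ≤ w.sepBound y) :
    w.sepBound s ≤ max (w.sepBound x) (w.p x s) := by
  refine sup0_le ((hB x).trans (le_max_left _ _)) ?_
  rintro _ ⟨Z, hZ, hsZ, rfl⟩
  by_cases hx : x ∈ Z
  · exact (w.cut_le hx hsZ).trans (le_max_right _ _)
  · exact (w.cut_le_sepBound hZ hx).trans (le_max_left _ _)

lemma minOut_le (hs : s ≠ x) : w.minOut x ≤ w.p x s :=
  inf1_le_s14 ((Set.finite_range (w.p x)).subset (by rintro _ ⟨s, -, rfl⟩; exact ⟨s, rfl⟩))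
    ⟨s, hs, rfl⟩

lemma exists_p_eq_minOut [Nontrivial I] (x : I) : ∃ s ≠ x, w.p x s = w.minOut x := by
  obtain ⟨z, hz⟩ := exists_ne x
  obtain ⟨s, hs, h⟩ := inf1_mem (S := {b | ∃ s, s ≠ x ∧ b = w.p x s})
    ((Set.finite_range (w.p x)).subset (by rintro _ ⟨s, -, rfl⟩; exact ⟨s, rfl⟩)) ⟨_, z, hz, rfl⟩
  exact ⟨s, hs, h.symm⟩

end Basic

section Revision

variable (w : PVal I) (x y u z : I)

lemma Tcp_p : (Tcp w).p u z = max (w.p u z)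
    (sup0 {a | ∃ X : Finset I, z ∈ X ∧ u ∉ X ∧
      a = min (max (inf1 {b | ∃ r ∈ X, b = w.nt r}) (sup0 {b | ∃ s, s ∉ X ∧ b = w.t s}))
        (inf1 {b | ∃ r ∈ X, ∃ s, s ∉ X ∧ ¬(r = z ∧ s = u) ∧ b = w.p r s})}) := rfl

lemma t_le_Tcp_t : w.t x ≤ (Tcp w).t x := le_max_left _ _

lemma nt_le_Tcp_nt : w.nt y ≤ (Tcp w).nt y := le_max_left _ _

lemma p_le_Tcp_p : w.p u z ≤ (Tcp w).p u z := le_max_left _ _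

lemma sepBound_le_Tcp_nt : w.sepBound y ≤ (Tcp w).nt y :=
  (le_max_right _ _).trans (le_max_right _ _)

lemma minOut_le_Tcp_t [Finite I] (h1 : w.minOut x ≤ 1) : w.minOut x ≤ (Tcp w).t x := by
  have hfin : {a | ∃ X : Finset I, x ∈ X ∧
      a = min (inf1 {b | ∃ r ∈ X, r ≠ x ∧ b = w.nt r}) (w.cut X)}.Finite :=
    (Set.finite_range fun X : Finset I =>
      min (inf1 {b | ∃ r ∈ X, r ≠ x ∧ b = w.nt r}) (w.cut X)).subset
      (by rintro _ ⟨X, -, rfl⟩; exact ⟨X, rfl⟩)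
  refine le_trans ?_ ((le_sup0 hfin ⟨{x}, Finset.mem_singleton_self x, rfl⟩).trans
    (le_max_right _ _))
  refine le_min (le_inf1 h1 ?_) (le_inf1 h1 ?_)
  · rintro _ ⟨r, hr, hrx, rfl⟩
    exact absurd (Finset.mem_singleton.mp hr) hrx
  · rintro _ ⟨r, hr, s, hs, rfl⟩
    rw [Finset.mem_singleton.mp hr]
    exact w.minOut_le (Finset.notMem_singleton.mp hs)

/-- The only way `Tcp` can raise `p_{rs}` above `β ≥ 0`. -/
lemma exists_of_lt_Tcp_p [Finite I] {r s : I} {β : ℝ} (hβ : 0 ≤ β) (hle : w.p r s ≤ β)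
    (hlt : β < (Tcp w).p r s) :
    ∃ Y : Finset I, s ∈ Y ∧ r ∉ Y ∧
      β < max (inf1 {b | ∃ r' ∈ Y, b = w.nt r'}) (sup0 {b | ∃ s', s' ∉ Y ∧ b = w.t s'}) ∧
      ∀ a ∈ Y, ∀ b ∉ Y, b ≠ r → β < w.p a b := by
  rw [Tcp_p] at hlt
  obtain ⟨_, ⟨Y, hsY, hrY, rfl⟩, hβY⟩ :=
    exists_lt_of_lt_sup0 hβ ((lt_max_iff.mp hlt).resolve_left hle.not_gt)
  refine ⟨Y, hsY, hrY, hβY.trans_le (min_le_left _ _), fun a ha b hb hbr => ?_⟩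
  refine hβY.trans_le ((min_le_right _ _).trans (inf1_le_s14 ?_ ⟨a, ha, b, hb, fun h => hbr h.2, rfl⟩))
  exact (w.finite_cutSet Y).subset (by rintro _ ⟨a, ha, b, hb, -, rfl⟩; exact ⟨a, ha, b, hb, rfl⟩)

end Revision

structure Controlled (v w : PVal I) : Prop where
  p_ge : ∀ u z, v.p u z ≤ w.p u z
  nt_le : ∀ y, w.nt y ≤ v.sepBound y
  t_le_of_ne : ∀ {r y}, r ≠ y → w.t r ≤ v.sepBound y
  t_le : ∀ x, w.t x ≤ max (v.sepBound x) (v.minOut x)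
  exists_p_le : ∀ x, ∃ s ≠ x, w.p x s ≤ max (v.sepBound x) (v.minOut x)
  cut_le : ∀ {X : Finset I}, X.Nonempty → ∀ {y}, y ∉ X → w.cut X ≤ v.sepBound y

variable {v w : PVal I}

lemma controlled_self [Finite I] [Nontrivial I] (ht : ∀ x, v.t x = 0) (hnt : ∀ x, v.nt x = 0)
    (hB : ∀ y, 0 ≤ v.sepBound y) : Controlled v v where
  p_ge _ _ := le_rfl
  nt_le y := (hnt y).le.trans (hB y)
  t_le_of_ne {r y} _ := (ht r).le.trans (hB y)
  t_le x := (ht x).le.trans ((hB x).trans (le_max_left _ _))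
  exists_p_le x :=
    let ⟨s, hs, h⟩ := v.exists_p_eq_minOut x
    ⟨s, hs, h.le.trans (le_max_right _ _)⟩
  cut_le hX _ hy := v.cut_le_sepBound hX hy

namespace Controlled

variable {X Y : Finset I} {x y : I}

lemma Tcp_nt_le (H : Controlled v w) (hB : ∀ y, 0 ≤ v.sepBound y) (y : I) :
    (Tcp w).nt y ≤ v.sepBound y := by
  refine max_le (H.nt_le y) (max_le (sup0_le (hB y) ?_) (sup0_le (hB y) ?_))
  · rintro _ ⟨r, hr, rfl⟩
    exact H.t_le_of_ne hr
  · rintro _ ⟨X, hX, hyX, rfl⟩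
    exact H.cut_le hX hyX

variable [Finite I]

lemma inf1_nt_le (H : Controlled v w) (hy : y ∈ X) :
    inf1 {b | ∃ r ∈ X, b = w.nt r} ≤ v.sepBound y := by
  have hfin : {b | ∃ r ∈ X, b = w.nt r}.Finite :=
    (Set.finite_range w.nt).subset (by rintro _ ⟨r, -, rfl⟩; exact ⟨r, rfl⟩)
  exact (inf1_le_s14 hfin ⟨y, hy, rfl⟩).trans (H.nt_le y)

lemma inf1_nt_ne_le (H : Controlled v w) (hy : y ∈ X) (hyx : y ≠ x) :
    inf1 {b | ∃ r ∈ X, r ≠ x ∧ b = w.nt r} ≤ v.sepBound y := by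
  have hfin : {b | ∃ r ∈ X, r ≠ x ∧ b = w.nt r}.Finite :=
    (Set.finite_range w.nt).subset (by rintro _ ⟨r, -, -, rfl⟩; exact ⟨r, rfl⟩)
  exact (inf1_le_s14 hfin ⟨y, hy, hyx, rfl⟩).trans (H.nt_le y)

lemma sepBound_le_of_p_le (H : Controlled v w) (hB : ∀ y, 0 ≤ v.sepBound y) {s : I}
    (hs : w.p x s ≤ max (v.sepBound x) (v.minOut x)) :
    v.sepBound s ≤ max (v.sepBound x) (v.minOut x) :=
  (v.sepBound_le_max hB).trans (max_le (le_max_left _ _) ((H.p_ge x s).trans hs))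

lemma max_le_sepBound (H : Controlled v w) (hB : ∀ y, 0 ≤ v.sepBound y) (hy : y ∈ Y) :
    max (inf1 {b | ∃ r ∈ Y, b = w.nt r}) (sup0 {b | ∃ s, s ∉ Y ∧ b = w.t s}) ≤
      v.sepBound y := by
  refine max_le (H.inf1_nt_le hy) (sup0_le (hB y) ?_)
  rintro _ ⟨s, hs, rfl⟩
  exact H.t_le_of_ne (ne_of_mem_of_not_mem hy hs).symm

lemma Tcp_t_le_of_ne (H : Controlled v w) (hB : ∀ y, 0 ≤ v.sepBound y) {r : I} (hry : r ≠ y) :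
    (Tcp w).t r ≤ v.sepBound y := by
  refine max_le (H.t_le_of_ne hry) (sup0_le (hB y) ?_)
  rintro _ ⟨X, hrX, rfl⟩
  by_cases hyX : y ∈ X
  · exact (min_le_left _ _).trans (H.inf1_nt_ne_le hyX hry.symm)
  · exact (min_le_right _ _).trans (H.cut_le ⟨r, hrX⟩ hyX)

lemma Tcp_t_le (H : Controlled v w) (hB : ∀ y, 0 ≤ v.sepBound y) (x : I) :
    (Tcp w).t x ≤ max (v.sepBound x) (v.minOut x) := by
  obtain ⟨s, hsx, hs⟩ := H.exists_p_le x
  refine max_le (H.t_le x) (sup0_le ((hB x).trans (le_max_left _ _)) ?_)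
  rintro _ ⟨X, hxX, rfl⟩
  by_cases hsX : s ∈ X
  · exact (min_le_left _ _).trans ((H.inf1_nt_ne_le hsX hsx).trans (H.sepBound_le_of_p_le hB hs))
  · exact (min_le_right _ _).trans ((w.cut_le hxX hsX).trans hs)

lemma exists_Tcp_p_le (H : Controlled v w) (hB : ∀ y, 0 ≤ v.sepBound y) (x : I) :
    ∃ s ≠ x, (Tcp w).p x s ≤ max (v.sepBound x) (v.minOut x) := by
  obtain ⟨s, hsx, hs⟩ := H.exists_p_le x
  refine ⟨s, hsx, max_le hs (sup0_le ((hB x).trans (le_max_left _ _)) ?_)⟩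
  rintro _ ⟨Y, hsY, -, rfl⟩
  refine (min_le_left _ _).trans (max_le ((H.inf1_nt_le hsY).trans (H.sepBound_le_of_p_le hB hs))
    (sup0_le ((hB x).trans (le_max_left _ _)) ?_))
  rintro _ ⟨r, -, rfl⟩
  rcases eq_or_ne r x with rfl | hrx
  · exact H.t_le r
  · exact (H.t_le_of_ne hrx).trans (le_max_left _ _)

lemma exists_ssuperset_lt_Tcp_cut (H : Controlled v w) (hB : ∀ y, 0 ≤ v.sepBound y)
    {U : Finset I} (hU : U.Nonempty) (hyU : y ∉ U) (hlt : v.sepBound y < (Tcp w).cut U) :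
    ∃ U', U ⊂ U' ∧ y ∉ U' ∧ v.sepBound y < (Tcp w).cut U' := by
  classical
  obtain ⟨u, hu⟩ := hU
  have hTedge : ∀ a ∈ U, ∀ b ∉ U, v.sepBound y < (Tcp w).p a b :=
    fun a ha b hb => hlt.trans_le ((Tcp w).cut_le ha hb)
  obtain ⟨r, hr, s, hs, hrs⟩ := w.exists_p_eq_cut hu hyU
  obtain ⟨Y, hsY, -, hY, hYedge⟩ :=
    w.exists_of_lt_Tcp_p (hB y) (hrs.trans_le (H.cut_le ⟨u, hu⟩ hyU)) (hTedge r hr s hs)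
  have hyY : y ∉ Y := fun hy => (H.max_le_sepBound hB hy).not_gt hY
  have hyUY : y ∉ U ∪ Y := by simp [hyU, hyY]
  refine ⟨U ∪ Y, (Finset.ssubset_iff_of_subset Finset.subset_union_left).mpr
    ⟨s, Finset.mem_union_right _ hsY, hs⟩, hyUY, ?_⟩
  obtain ⟨a, ha, b, hb, hab⟩ := (Tcp w).exists_p_eq_cut (Finset.mem_union_left _ hr) hyUY
  rw [← hab]
  rw [Finset.mem_union, not_or] at hb
  rcases Finset.mem_union.mp ha with ha | ha
  · exact hTedge a ha b hb.1
  · exact (hYedge a ha b hb.2 (ne_of_mem_of_not_mem hr hb.1).symm).trans_le (w.p_le_Tcp_p a b)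

lemma Tcp_cut_le (H : Controlled v w) (hB : ∀ y, 0 ≤ v.sepBound y) (hX : X.Nonempty)
    (hy : y ∉ X) : (Tcp w).cut X ≤ v.sepBound y := by
  by_contra! hlt
  obtain ⟨U, hU⟩ := (Set.toFinite {U : Finset I | U.Nonempty ∧ y ∉ U ∧
    v.sepBound y < (Tcp w).cut U}).exists_maximal ⟨X, hX, hy, hlt⟩
  obtain ⟨U', hUU', hyU', hlt'⟩ := H.exists_ssuperset_lt_Tcp_cut hB hU.1.1 hU.1.2.1 hU.1.2.2
  exact hU.not_gt ⟨hU.1.1.mono hUU'.subset, hyU', hlt'⟩ hUU'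

lemma revise (H : Controlled v w) (hB : ∀ y, 0 ≤ v.sepBound y) : Controlled v (Tcp w) where
  p_ge u z := (H.p_ge u z).trans (w.p_le_Tcp_p u z)
  nt_le := H.Tcp_nt_le hB
  t_le_of_ne := H.Tcp_t_le_of_ne hB
  t_le := H.Tcp_t_le hB
  exists_p_le := H.exists_Tcp_p_le hB
  cut_le hX _ hy := H.Tcp_cut_le hB hX hy

end Controlled

lemma controlled_iterate [Finite I] [Nontrivial I] (ht : ∀ x, v.t x = 0) (hnt : ∀ x, v.nt x = 0)
    (hB : ∀ y, 0 ≤ v.sepBound y) (n : ℕ) : Controlled v (Tcp^[n] v) :=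
  Function.Iterate.rec (Controlled v) (controlled_self ht hnt hB) (fun _ H => H.revise hB) n

end PVal

theorem stmt14_general {I : Type*} [Fintype I]
    (hcard : 2 ≤ Fintype.card I)
    (v : PVal I)
    (hbox : ∀ x y : I, x ≠ y → v.p x y ∈ Set.Icc (0:ℝ) 1)
    (ht : ∀ x, v.t x = 0) (hnt : ∀ x, v.nt x = 0)
    (vstar : PVal I) (hstar : ∃ N : ℕ, ∀ n ≥ N, Tcp^[n] v = vstar) :
    (∀ y : I,
      vstar.nt y = sup0 {a : ℝ | ∃ X : Finset I, X.Nonempty ∧ y ∉ X ∧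
        a = inf1 {b : ℝ | ∃ r ∈ X, ∃ s, s ∉ X ∧ b = v.p r s}} ∧
      vstar.nt y = (Tcp v).nt y) ∧
    (∀ x : I, vstar.nt x < vstar.t x →
      vstar.t x = inf1 {b : ℝ | ∃ s, s ≠ x ∧ b = v.p x s}) := by
  have : Nontrivial I := Fintype.one_lt_card_iff_nontrivial.mp hcard
  have hB : ∀ y, 0 ≤ v.sepBound y := v.sepBound_nonneg fun x y hxy => (hbox x y hxy).1
  obtain ⟨N, hN⟩ := hstar
  have hvstar : Tcp^[N] (Tcp v) = vstar := hN (N + 1) N.le_succ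
  have H1 : PVal.Controlled v (Tcp v) := PVal.controlled_iterate ht hnt hB 1
  have H : PVal.Controlled v vstar := hvstar ▸ PVal.controlled_iterate ht hnt hB (N + 1)
  have hnt1 (y : I) : (Tcp v).nt y = v.sepBound y :=
    (H1.nt_le y).antisymm (v.sepBound_le_Tcp_nt y)
  have hnt_star (y : I) : vstar.nt y = v.sepBound y :=
    (H.nt_le y).antisymm <| (hnt1 y).symm.le.trans <|
      hvstar ▸ le_apply_iterate (fun w : PVal I => w.nt y) (fun w => w.nt_le_Tcp_nt y) _ N
  refine ⟨fun y => ⟨hnt_star y, (hnt_star y).trans (hnt1 y).symm⟩, fun x hx => ?_⟩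
  obtain ⟨s, hsx⟩ := exists_ne x
  have hm1 : v.minOut x ≤ 1 := (v.minOut_le hsx).trans (hbox x s hsx.symm).2
  have hle : vstar.t x ≤ v.minOut x :=
    (le_max_iff.mp (H.t_le x)).resolve_left (by rw [← hnt_star]; exact hx.not_ge)
  exact hle.antisymm <| (v.minOut_le_Tcp_t x hm1).trans <|
    hvstar ▸ le_apply_iterate (fun w : PVal I => w.t x) (fun w => w.t_le_Tcp_t x) _ N

/-- For the comprehensive prominence doctrine with zero initial belief in the
`t_x` and `¬t_x`: (i) `v*(¬t_y)` is the max over nonempty `X ⊆ I \ {y}` of the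
min over `r ∈ X, s ∉ X` of `v(p_{rs})`, attained already at the first iterate;
(ii) if `t_x` is accepted then `v*(t_x) = min_{s ≠ x} v(p_{xs})`. -/
theorem stmt14 {I : Type*} [Fintype I] [DecidableEq I]
    (hcard : 2 ≤ Fintype.card I)
    (v : PVal I)
    (hbox : ∀ x y : I, x ≠ y → v.p x y ∈ Set.Icc (0:ℝ) 1)
    (ht : ∀ x, v.t x = 0) (hnt : ∀ x, v.nt x = 0)
    (vstar : PVal I) (hstar : ∃ N : ℕ, ∀ n ≥ N, Tcp^[n] v = vstar) :
    (∀ y : I,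
      vstar.nt y = sup0 {a : ℝ | ∃ X : Finset I, X.Nonempty ∧ y ∉ X ∧
        a = inf1 {b : ℝ | ∃ r ∈ X, ∃ s, s ∉ X ∧ b = v.p r s}} ∧
      vstar.nt y = (Tcp v).nt y) ∧
    (∀ x : I, vstar.nt x < vstar.t x →
      vstar.t x = inf1 {b : ℝ | ∃ s, s ≠ x ∧ b = v.p x s}) :=
  stmt14_general hcard v hbox ht hnt vstar hstar
end
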